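/- Let S ⊂ ℤ² be a finite convex set having two antiparallel boundary edges w₁ and w₂. Then every line parallel to w₁ that intersects S contains at least min(|w₁ ∩ S|, |w₂ ∩ S|) − 1 integer points of S. -/

import Mathlib

open Classical

namespace Nivat

noncomputable section

/-- Embedding of `ℤ × ℤ` into `ℝ × ℝ`. -/
def e (p : ℤ × ℤ) : ℝ × ℝ := ((p.1 : ℝ), (p.2 : ℝ))

/-- A finite set `S ⊆ ℤ²` is convex if `S = conv(S) ∩ ℤ²`. -/
def IsConvexSet (S : Finset (ℤ × ℤ)) : Prop :=
  ∀ p : ℤ × ℤ, e p ∈ convexHull ℝ (e '' (S : Set (ℤ × ℤ))) → p ∈ S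

variable {A : Type*}

/-- The `η`-coloring of `S` induced by the translate by `u`. -/
def pat (η : ℤ × ℤ → A) (S : Finset (ℤ × ℤ)) (u : ℤ × ℤ) : S → A :=
  fun x => η ((x : ℤ × ℤ) + u)

/-- `P_η(S)`: number of distinct `η`-colorings of `S`. -/
def Pc (η : ℤ × ℤ → A) (S : Finset (ℤ × ℤ)) : ℕ :=
  (Set.range (pat η S)).ncard

/-- Discrepancy `D_η(S) = P_η(S) - |S|`. -/
def Dc (η : ℤ × ℤ → A) (S : Finset (ℤ × ℤ)) : ℤ :=
  (Pc η S : ℤ) - (S.card : ℤ)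

/-- Restriction of a coloring of `S` to a subset `T`. -/
def res {S T : Finset (ℤ × ℤ)} (h : T ⊆ S) (f : S → A) : T → A :=
  fun x => f ⟨(x : ℤ × ℤ), h x.2⟩

/-- A coloring `α` of `T` extends uniquely to an `η`-coloring of `S`. -/
def ExtendsUniquely (η : ℤ × ℤ → A) {T S : Finset (ℤ × ℤ)} (h : T ⊆ S) (α : T → A) : Prop :=
  ∃! β : S → A, β ∈ Set.range (pat η S) ∧ res h β = α

/-- A coloring `α` of `T` has at least two extensions to `η`-colorings of `S`. -/
def ExtendsNonUniquely (η : ℤ × ℤ → A) {T S : Finset (ℤ × ℤ)} (h : T ⊆ S) (α : T → A) : Prop :=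
  ∃ β₁ β₂ : S → A, β₁ ∈ Set.range (pat η S) ∧ β₂ ∈ Set.range (pat η S) ∧
    β₁ ≠ β₂ ∧ res h β₁ = α ∧ res h β₂ = α

theorem eraseSub (S : Finset (ℤ × ℤ)) (x : ℤ × ℤ) : S.erase x ⊆ S :=
  fun _ hy => Finset.mem_of_mem_erase hy

theorem sdiffSub (S T : Finset (ℤ × ℤ)) : S \ T ⊆ S :=
  fun _ hy => (Finset.mem_sdiff.mp hy).1

/-- `x ∈ S` is `η`-generated by `S`: every `η`-coloring of `S \ {x}`
extends uniquely to an `η`-coloring of `S`. -/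
def Generated (η : ℤ × ℤ → A) (S : Finset (ℤ × ℤ)) (x : ℤ × ℤ) : Prop :=
  ∀ α ∈ Set.range (pat η (S.erase x)), ExtendsUniquely η (eraseSub S x) α

/-- `x` is an extreme point of the convex polygon `conv(S)`. -/
def IsExtremePt (S : Finset (ℤ × ℤ)) (x : ℤ × ℤ) : Prop :=
  e x ∈ Set.extremePoints ℝ (convexHull ℝ (e '' (S : Set (ℤ × ℤ))))

/-- A weak `η`-generating set: finite, nonempty, convex, and every extreme
point is `η`-generated. -/
def WeakGenerating (η : ℤ × ℤ → A) (S : Finset (ℤ × ℤ)) : Prop :=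
  S.Nonempty ∧ IsConvexSet S ∧ ∀ x ∈ S, IsExtremePt S x → Generated η S x

/-- An `η`-generating set: weak generating and every nonempty proper convex
subset has strictly larger discrepancy. -/
def Generating (η : ℤ × ℤ → A) (S : Finset (ℤ × ℤ)) : Prop :=
  WeakGenerating η S ∧
    ∀ T ⊆ S, T ≠ S → T.Nonempty → IsConvexSet T → Dc η S < Dc η T

/-- The segment from `e p` to `e q` is a (1-dimensional exposed) boundary edge
of the convex polygon `conv(S)`. -/
def IsEdge (S : Finset (ℤ × ℤ)) (p q : ℤ × ℤ) : Prop :=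
  p ≠ q ∧ p ∈ S ∧ q ∈ S ∧ ∃ ℓ : (ℝ × ℝ) →ₗ[ℝ] ℝ, ∃ c : ℝ,
    (∀ x ∈ convexHull ℝ (e '' (S : Set (ℤ × ℤ))), ℓ x ≤ c) ∧
    {x ∈ convexHull ℝ (e '' (S : Set (ℤ × ℤ))) | ℓ x = c} = segment ℝ (e p) (e q)

/-- An edge of `S`, oriented positively (the set lies to the left of `p → q`). -/
def IsOrientedEdge (S : Finset (ℤ × ℤ)) (p q : ℤ × ℤ) : Prop :=
  IsEdge S p q ∧ ∀ x ∈ S, 0 ≤ (q.1 - p.1) * (x.2 - p.2) - (q.2 - p.2) * (x.1 - p.1)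

/-- The lattice points of `S` lying on the edge from `p` to `q`. -/
def edgePts (S : Finset (ℤ × ℤ)) (p q : ℤ × ℤ) : Finset (ℤ × ℤ) :=
  S.filter (fun x => e x ∈ segment ℝ (e p) (e q))

/-- The rectangle `R_{n,k} = [0,n) × [0,k) ∩ ℤ²`. -/
def Rect (n k : ℕ) : Finset (ℤ × ℤ) :=
  Finset.Ico (0 : ℤ) (n : ℤ) ×ˢ Finset.Ico (0 : ℤ) (k : ℤ)

/-- `η` is aperiodic: no nonzero period vector. -/
def Aperiodic (η : ℤ × ℤ → A) : Prop :=
  ∀ v : ℤ × ℤ, v ≠ 0 → ∃ x : ℤ × ℤ, η (x + v) ≠ η x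

/-- Action of a `2 × 2` integer matrix on `ℤ²`. -/
def Mv (M : Matrix (Fin 2) (Fin 2) ℤ) (p : ℤ × ℤ) : ℤ × ℤ :=
  (M 0 0 * p.1 + M 0 1 * p.2, M 1 0 * p.1 + M 1 1 * p.2)

/-- `u` and `v` are positively parallel (same direction). -/
def PosParallel (u v : ℤ × ℤ) : Prop :=
  ∃ t₁ t₂ : ℤ, 0 < t₁ ∧ 0 < t₂ ∧ t₁ • u = t₂ • v

/-- The directed rational line through the origin with direction `d` is
one-sided `η`-expansive: for some `a, b ∈ ℕ` and `A ∈ SL₂(ℤ)` taking the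
downward `y`-axis to the direction `d`, every `(η ∘ A)`-coloring of
`[0,a] × [-b,b]` extends uniquely to `[0,a] × [-b,b] ∪ {(-1,0)}`. -/
def OneSidedExpansive (η : ℤ × ℤ → A) (d : ℤ × ℤ) : Prop :=
  ∃ a b : ℕ, ∃ M : Matrix (Fin 2) (Fin 2) ℤ, M.det = 1 ∧
    PosParallel (Mv M (0, -1)) d ∧
    ∀ u v : ℤ × ℤ,
      (∀ x : ℤ × ℤ, 0 ≤ x.1 → x.1 ≤ (a : ℤ) → -(b : ℤ) ≤ x.2 → x.2 ≤ (b : ℤ) →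
        η (Mv M (x + u)) = η (Mv M (x + v))) →
      η (Mv M ((-1, 0) + u)) = η (Mv M ((-1, 0) + v))

end

end Nivat

/-!
Write `q₁ - p₁ = d₁ • g` with `g` primitive; then `q₂ - p₂ = -(d₂ • g)`, and the two edges carry at
most `d₁ + 1` and `d₂ + 1` lattice points. The functional `φ = cross g` is constant on lines
parallel to `g`, and the orientations of the edges give `φ p₁ ≤ φ x ≤ φ p₂` on `S`. If
`φ z = a φ p₁ + b φ p₂` is a convex combination, the points `a p₁ + b q₂` and `a q₁ + b p₂` of
`conv(S)` lie on the line through `z` and differ by `(a d₁ + b d₂) • g`, a chord of length at least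
`min d₁ d₂` in units of `g`. Such a chord contains at least `min d₁ d₂` lattice points `z + k • g`.
-/

namespace Nivat

open Set

section Cross

variable {R : Type*} [CommRing R]

def cross : R × R →ₗ[R] R × R →ₗ[R] R :=
  LinearMap.mk₂ R (fun u w => u.1 * w.2 - u.2 * w.1)
    (fun _ _ _ => by simp only [Prod.fst_add, Prod.snd_add]; ring)
    (fun _ _ _ => by simp only [Prod.smul_fst, Prod.smul_snd, smul_eq_mul]; ring)
    (fun _ _ _ => by simp only [Prod.fst_add, Prod.snd_add]; ring)
    (fun _ _ _ => by simp only [Prod.smul_fst, Prod.smul_snd, smul_eq_mul]; ring)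

@[simp]
lemma cross_apply (u w : R × R) : cross u w = u.1 * w.2 - u.2 * w.1 := rfl

lemma exists_eq_smul_of_cross_eq_zero {g w : R × R} (hg : IsCoprime g.1 g.2)
    (hw : cross g w = 0) : ∃ s : R, w = s • g := by
  obtain ⟨a, b, hab⟩ := hg
  rw [cross_apply] at hw
  refine ⟨a * w.1 + b * w.2, Prod.ext ?_ ?_⟩
  · simp only [Prod.smul_fst, smul_eq_mul]
    linear_combination (-w.1) * hab - b * hw
  · simp only [Prod.smul_snd, smul_eq_mul]
    linear_combination (-w.2) * hab + a * hw

lemma ne_zero_of_isCoprime [Nontrivial R] {g : R × R} (hg : IsCoprime g.1 g.2) : g ≠ 0 := by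
  rintro rfl
  exact not_isUnit_zero (isCoprime_zero_left.1 hg)

end Cross

lemma e_add (x y : ℤ × ℤ) : e (x + y) = e x + e y := by
  simp only [e, Prod.fst_add, Prod.snd_add, Int.cast_add, Prod.mk_add_mk]

lemma e_sub (x y : ℤ × ℤ) : e (x - y) = e x - e y := by
  simp only [e, Prod.fst_sub, Prod.snd_sub, Int.cast_sub, Prod.mk_sub_mk]

lemma e_zsmul (k : ℤ) (x : ℤ × ℤ) : e (k • x) = (k : ℝ) • e x := by
  simp only [e, Prod.smul_fst, Prod.smul_snd, smul_eq_mul, Int.cast_mul, Prod.smul_mk]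

lemma e_injective : Function.Injective e := fun x y h => by
  simp only [e, Prod.mk.injEq, Int.cast_inj] at h
  exact Prod.ext h.1 h.2

lemma cross_e (u w : ℤ × ℤ) : cross (e u) (e w) = (cross u w : ℝ) := by
  simp only [e, cross_apply, Int.cast_sub, Int.cast_mul]

lemma finite_preimage_e_convexHull (S : Finset (ℤ × ℤ)) :
    (e ⁻¹' convexHull ℝ (e '' (S : Set (ℤ × ℤ)))).Finite :=
  ((Int.isClosedEmbedding_coe_real.prodMap Int.isClosedEmbedding_coe_real).isCompact_preimage
    ((S.finite_toSet.image e).isCompact_convexHull (𝕜 := ℝ))).finite_of_discrete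

lemma exists_coprime_smul_eq {v : ℤ × ℤ} (hv : v ≠ 0) :
    ∃ (d : ℕ) (g : ℤ × ℤ), 0 < d ∧ IsCoprime g.1 g.2 ∧ v = (d : ℤ) • g := by
  have hpos : 0 < Int.gcd v.1 v.2 := Int.gcd_pos_iff.2 (by
    by_contra! h
    exact hv (Prod.ext h.1 h.2))
  obtain ⟨d, a, b, hd, hab, ha, hb⟩ := Int.exists_gcd_one' hpos
  refine ⟨d, (a, b), hd, Int.isCoprime_iff_gcd_eq_one.2 hab, Prod.ext ?_ ?_⟩
  · simp only [Prod.smul_fst, smul_eq_mul, ha, mul_comm]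
  · simp only [Prod.smul_snd, smul_eq_mul, hb, mul_comm]

lemma exists_int_of_e_eq_smul {g w : ℤ × ℤ} {s : ℝ} (hg : IsCoprime g.1 g.2)
    (h : e w = s • e g) : ∃ k : ℤ, (k : ℝ) = s ∧ w = k • g := by
  obtain ⟨a, b, hab⟩ := hg
  have hab' : (a : ℝ) * g.1 + b * g.2 = 1 := by exact_mod_cast hab
  have h₁ : (w.1 : ℝ) = s * g.1 := congrArg Prod.fst h
  have h₂ : (w.2 : ℝ) = s * g.2 := congrArg Prod.snd h
  have hk : ((a * w.1 + b * w.2 : ℤ) : ℝ) = s := by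
    push_cast
    linear_combination a * h₁ + b * h₂ + s * hab'
  exact ⟨_, hk, e_injective (by rw [h, e_zsmul, hk])⟩

lemma exists_eq_smul_neg_of_posParallel {g v : ℤ × ℤ} {d : ℕ} (hg : IsCoprime g.1 g.2)
    (hd : 0 < d) (h : PosParallel ((d : ℤ) • g) (-v)) :
    ∃ d' : ℕ, 0 < d' ∧ v = (d' : ℤ) • -g := by
  obtain ⟨t₁, t₂, ht₁, ht₂, h⟩ := h
  have hg0 := ne_zero_of_isCoprime hg
  have hcross : cross g v = 0 := by
    have := congrArg (cross g) h
    simp only [map_zsmul, map_neg, cross_apply, smul_eq_mul] at this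
    have : t₂ * cross g v = 0 := by
      rw [cross_apply]
      linear_combination this
    exact (mul_eq_zero.1 this).resolve_left ht₂.ne'
  obtain ⟨k, rfl⟩ := exists_eq_smul_of_cross_eq_zero hg hcross
  have hk : t₁ * d + t₂ * k = 0 := by
    refine (smul_eq_zero.1 ?_).resolve_right hg0
    rw [add_smul, mul_smul, mul_smul, h, smul_neg, neg_add_cancel]
  have hk₀ : k < 0 := by nlinarith
  refine ⟨(-k).toNat, by omega, ?_⟩
  rw [Int.toNat_of_nonneg (by omega), neg_smul, smul_neg, neg_neg]

lemma IsOrientedEdge.cross_le {S : Finset (ℤ × ℤ)} {p q g : ℤ × ℤ} {d : ℕ}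
    (h : IsOrientedEdge S p q) (hd : 0 < d) (hpq : q = p + (d : ℤ) • g) {x : ℤ × ℤ}
    (hx : x ∈ S) : cross g p ≤ cross g x := by
  have : 0 ≤ cross (q - p) (x - p) := h.2 x hx
  rw [hpq, add_sub_cancel_left, map_zsmul, LinearMap.smul_apply, map_sub, smul_eq_mul] at this
  have := nonneg_of_mul_nonneg_right this (by exact_mod_cast hd)
  linarith

lemma card_edgePts_le (S : Finset (ℤ × ℤ)) {p q g : ℤ × ℤ} {d : ℕ} (hg : IsCoprime g.1 g.2)
    (hpq : q = p + (d : ℤ) • g) : (edgePts S p q).card ≤ d + 1 := by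
  have hsub : edgePts S p q ⊆ (Finset.range (d + 1)).image (fun i : ℕ => p + (i : ℤ) • g) := by
    intro x hx
    have hseg := (Finset.mem_filter.1 hx).2
    rw [segment_eq_image'] at hseg
    obtain ⟨θ, ⟨hθ₀, hθ₁⟩, hθ⟩ := hseg
    have hxp : e (x - p) = (θ * d) • e g := by
      rw [e_sub, ← hθ, hpq, e_add, e_zsmul, add_sub_cancel_left, add_sub_cancel_left, smul_smul]
      norm_cast
    obtain ⟨k, hk, hxk⟩ := exists_int_of_e_eq_smul hg hxp
    have hk₀ : 0 ≤ k := by exact_mod_cast hk ▸ (by positivity : (0 : ℝ) ≤ θ * d)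
    have hkd : k ≤ d := by
      have : θ * d ≤ d := mul_le_of_le_one_left (by positivity) hθ₁
      exact_mod_cast hk ▸ this
    refine Finset.mem_image.2 ⟨k.toNat, Finset.mem_range.2 (by omega), ?_⟩
    rw [Int.toNat_of_nonneg hk₀, ← hxk, add_sub_cancel]
  calc (edgePts S p q).card ≤ _ := Finset.card_le_card hsub
    _ ≤ (Finset.range (d + 1)).card := Finset.card_image_le
    _ = d + 1 := Finset.card_range _

lemma exists_chord_of_antiparallel {E : Type*} [AddCommGroup E] [Module ℝ E] {H : Set E}
    (hH : Convex ℝ H) (φ : E →ₗ[ℝ] ℝ) {v p₁ p₂ z : E} {d₁ d₂ : ℝ} (hv : φ v = 0)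
    (hp₁ : p₁ ∈ H) (hq₁ : p₁ + d₁ • v ∈ H) (hp₂ : p₂ ∈ H) (hq₂ : p₂ - d₂ • v ∈ H)
    (h₁ : φ p₁ ≤ φ z) (h₂ : φ z ≤ φ p₂) :
    ∃ A c, A ∈ H ∧ A + c • v ∈ H ∧ φ A = φ z ∧ min d₁ d₂ ≤ c := by
  obtain ⟨a, b, ha, hb, hab, hz⟩ : φ z ∈ segment ℝ (φ p₁) (φ p₂) := by
    rw [segment_eq_Icc (h₁.trans h₂)]
    exact ⟨h₁, h₂⟩
  refine ⟨a • p₁ + b • (p₂ - d₂ • v), a * d₁ + b * d₂, hH hp₁ hq₂ ha hb hab, ?_, ?_, ?_⟩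
  · convert hH hq₁ hp₂ ha hb hab using 1
    module
  · simpa [hv] using hz
  · have hmin : min d₁ d₂ = a * min d₁ d₂ + b * min d₁ d₂ := by rw [← add_mul, hab, one_mul]
    nlinarith [mul_le_mul_of_nonneg_left (min_le_left d₁ d₂) ha,
      mul_le_mul_of_nonneg_left (min_le_right d₁ d₂) hb]

lemma le_ncard_of_chord {H : Set (ℝ × ℝ)} (hH : Convex ℝ H) (hfin : (e ⁻¹' H).Finite)
    {g z : ℤ × ℤ} (hg : g ≠ 0) (P : ℤ × ℤ → Prop) (hP : ∀ k : ℤ, P (z + k • g)) {a c : ℝ}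
    {m : ℕ} (ha : e z + a • e g ∈ H) (hc : e z + (a + c) • e g ∈ H) (hm : (m : ℝ) ≤ c) :
    m ≤ {x | e x ∈ H ∧ P x}.ncard := by
  have hline : ∀ s ∈ Icc a (a + c), e z + s • e g ∈ H := by
    intro s hs
    have hf : ∀ t : ℝ, AffineMap.lineMap (e z) (e z + e g) t = e z + t • e g := fun t => by
      rw [AffineMap.lineMap_apply_module', add_sub_cancel_left, add_comm]
    have hconv := hH.affine_preimage (AffineMap.lineMap (e z) (e z + e g))
    have := hconv.ordConnected.out (show a ∈ _ by rwa [mem_preimage, hf])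
      (show a + c ∈ _ by rwa [mem_preimage, hf]) hs
    rwa [mem_preimage, hf] at this
  refine le_ncard_of_inj_on_range (fun i => z + (⌈a⌉ + i) • g) (fun i hi => ⟨?_, hP _⟩)
    (fun i _ j _ hij => ?_) (hfin.subset fun x hx => hx.1)
  · rw [e_add, e_zsmul]
    have : (i : ℝ) + 1 ≤ m := by exact_mod_cast hi
    refine hline _ ⟨?_, ?_⟩ <;> push_cast <;> linarith [Int.le_ceil a, Int.ceil_lt_add_one a]
  · have := smul_left_injective ℤ hg (add_left_cancel hij)
    omega

lemma exists_chord_of_orientedEdges {S : Finset (ℤ × ℤ)} {p₁ q₁ p₂ q₂ g z : ℤ × ℤ}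
    {d₁ d₂ : ℕ} (hg : IsCoprime g.1 g.2) (h₁ : IsOrientedEdge S p₁ q₁)
    (h₂ : IsOrientedEdge S p₂ q₂) (hd₁ : 0 < d₁) (hd₂ : 0 < d₂) (hq₁ : q₁ = p₁ + (d₁ : ℤ) • g)
    (hq₂ : q₂ = p₂ + (d₂ : ℤ) • -g) (hz : z ∈ S) :
    ∃ a c : ℝ, e z + a • e g ∈ convexHull ℝ (e '' (S : Set (ℤ × ℤ))) ∧
      e z + (a + c) • e g ∈ convexHull ℝ (e '' (S : Set (ℤ × ℤ))) ∧ min (d₁ : ℝ) d₂ ≤ c := by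
  have hmem : ∀ x ∈ S, e x ∈ convexHull ℝ (e '' (S : Set (ℤ × ℤ))) :=
    fun x hx => subset_convexHull ℝ _ ⟨x, hx, rfl⟩
  have he₁ : e q₁ = e p₁ + (d₁ : ℝ) • e g := by rw [hq₁, e_add, e_zsmul, Int.cast_natCast]
  have he₂ : e q₂ = e p₂ - (d₂ : ℝ) • e g := by
    rw [hq₂, smul_neg, ← sub_eq_add_neg, e_sub, e_zsmul, Int.cast_natCast]
  have hz₂ : cross g z ≤ cross g p₂ := by
    simpa only [map_neg, LinearMap.neg_apply, neg_le_neg_iff] using h₂.cross_le hd₂ hq₂ hz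
  obtain ⟨A, c, hA, hAc, hφA, hc⟩ := exists_chord_of_antiparallel (convex_convexHull ℝ _)
    (cross (e g)) (v := e g) (z := e z) (by rw [cross_apply]; ring)
    (hmem p₁ h₁.1.2.1) (he₁ ▸ hmem q₁ h₁.1.2.2.1) (hmem p₂ h₂.1.2.1) (he₂ ▸ hmem q₂ h₂.1.2.2.1)
    (by rw [cross_e, cross_e]; exact_mod_cast h₁.cross_le hd₁ hq₁ hz)
    (by rw [cross_e, cross_e]; exact_mod_cast hz₂)
  obtain ⟨a, ha⟩ := exists_eq_smul_of_cross_eq_zero (hg.intCast (R := ℝ))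
    (w := A - e z) (by rw [map_sub, hφA, sub_self])
  rw [sub_eq_iff_eq_add'] at ha
  exact ⟨a, c, ha ▸ hA, by rwa [ha, add_assoc, ← add_smul] at hAc, hc⟩

theorem statement8_general (S : Finset (ℤ × ℤ))
    (p₁ q₁ p₂ q₂ : ℤ × ℤ)
    (h₁ : IsOrientedEdge S p₁ q₁) (h₂ : IsOrientedEdge S p₂ q₂)
    (hanti : PosParallel (q₁ - p₁) (-(q₂ - p₂)))
    (z : ℤ × ℤ) (hz : z ∈ S) :
    min (edgePts S p₁ q₁).card (edgePts S p₂ q₂).card - 1 ≤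
      Set.ncard {x : ℤ × ℤ | e x ∈ convexHull ℝ (e '' (S : Set (ℤ × ℤ))) ∧
        (x.1 - z.1) * (q₁.2 - p₁.2) = (x.2 - z.2) * (q₁.1 - p₁.1)} := by
  obtain ⟨d₁, g, hd₁, hg, hv₁⟩ := exists_coprime_smul_eq (sub_ne_zero.2 h₁.1.1.symm)
  obtain ⟨d₂, hd₂, hv₂⟩ := exists_eq_smul_neg_of_posParallel hg hd₁ (hv₁ ▸ hanti)
  have hq₁ : q₁ = p₁ + (d₁ : ℤ) • g := by rw [← hv₁, add_sub_cancel]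
  have hq₂ : q₂ = p₂ + (d₂ : ℤ) • -g := by rw [← hv₂, add_sub_cancel]
  obtain ⟨a, c, ha, hc, hmin⟩ := exists_chord_of_orientedEdges hg h₁ h₂ hd₁ hd₂ hq₁ hq₂ hz
  have hcount := le_ncard_of_chord (convex_convexHull ℝ _) (finite_preimage_e_convexHull S)
    (ne_zero_of_isCoprime hg) (fun x => (x.1 - z.1) * (q₁.2 - p₁.2) = (x.2 - z.2) * (q₁.1 - p₁.1))
    (fun k => by
      simp only [hq₁, Prod.fst_add, Prod.snd_add, Prod.smul_fst, Prod.smul_snd, smul_eq_mul]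
      ring) ha hc (m := min d₁ d₂) (by push_cast; exact hmin)
  have hc₁ := card_edgePts_le S hg hq₁
  have hc₂ := card_edgePts_le S hg.neg_neg hq₂
  omega

/-- If a finite convex `S ⊂ ℤ²` has two antiparallel boundary edges `w₁, w₂`,
then every line parallel to `w₁` that meets `S` contains at least
`min(|w₁ ∩ S|, |w₂ ∩ S|) - 1` integer points of `conv(S)`. -/
theorem statement8 (S : Finset (ℤ × ℤ)) (hconv : IsConvexSet S)
    (p₁ q₁ p₂ q₂ : ℤ × ℤ)
    (h₁ : IsOrientedEdge S p₁ q₁) (h₂ : IsOrientedEdge S p₂ q₂)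
    (hanti : PosParallel (q₁ - p₁) (-(q₂ - p₂)))
    (z : ℤ × ℤ) (hz : z ∈ S) :
    min (edgePts S p₁ q₁).card (edgePts S p₂ q₂).card - 1 ≤
      Set.ncard {x : ℤ × ℤ | e x ∈ convexHull ℝ (e '' (S : Set (ℤ × ℤ))) ∧
        (x.1 - z.1) * (q₁.2 - p₁.2) = (x.2 - z.2) * (q₁.1 - p₁.1)} :=
  statement8_general S p₁ q₁ p₂ q₂ h₁ h₂ hanti z hz

end Nivat
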